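/- Let d ≥ 2 be an integer and α = (d-1)/d. For an integer N ≥ 1 and 1 ≤ i ≤ N^d, define the Hardy constant B₋(N,i) = max over integers x with 0 ≤ x < i of ( ∑_{y=x}^{i-1} exp(y^α) (max(y,1))^{-α} ) · ( ∑_{y=0}^{x} exp(-y^α) ). Then there exists k = k(d) ≥ 1 such that for all N ≥ 1 and all integers 1 ≤ i ≤ N^d: (1/k) · i^{1-2α} · exp(i^α) ≤ B₋(N,i) ≤ k · i^{1-2α} · exp(i^α). -/

import Mathlib

/-!
Write `R(x) = ∑_{x ≤ y < i} e^{y^α} max(y,1)^{-α}` and `M(x) = ∑_{y ≤ x} e^{-y^α}`, so that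
`B₋ = max_{x < i} R(x) M(x)`. The masses `M(x)` lie between their first term `1` and the
convergent series `∑ e^{-y^α}`, so `B₋` is comparable to the resistances `R(x)`.

Upper bound: `h(t) = t^{1-2α} e^{t^α}` satisfies `h' ≥ (1-α) e^{t^α} t^{-α}` for `t ≥ 1`
(this is where `α ≥ 1/2` enters), so by the mean value theorem and telescoping
`R(0) ≤ 2/(1-α) · h(i)`.

Lower bound: the last `m = ⌈i^{1-α}⌉` terms of `R(0)` are each at least `e^{(i-m)^α} i^{-α}`, and
`(i-m)^α ≥ (i-m) i^{α-1} ≥ i^α - 2`, so `R(i-m) ≥ e^{-2} h(i)`.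
-/

noncomputable section

/-- The exponent `α = (d-1)/d`. -/
def alphaOf (d : ℕ) : ℝ := ((d : ℝ) - 1) / d

/-- The Hardy constant
`B₋(N,i) = max_{0 ≤ x < i} (∑_{y=x}^{i-1} e^{y^α} (max(y,1))^{-α}) ·
(∑_{y=0}^{x} e^{-y^α})`. -/
def Bminus (d N i : ℕ) : ℝ :=
  sSup ((fun x : ℕ =>
      (∑ y ∈ Finset.Icc x (i - 1),
        Real.exp ((y : ℝ) ^ alphaOf d) * ((max y 1 : ℕ) : ℝ) ^ (-alphaOf d)) *
      (∑ y ∈ Finset.range (x + 1), Real.exp (-(y : ℝ) ^ alphaOf d))) ''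
    {x : ℕ | x < i})

open Real Finset Filter Asymptotics

/-- `resistance α y` and `mass α y` are `1 / (μ(y) b(y))` and `μ(y)` with the normalisation `Z`
dropped. -/
def resistance (α : ℝ) (y : ℕ) : ℝ := exp ((y : ℝ) ^ α) * ((max y 1 : ℕ) : ℝ) ^ (-α)

def mass (α : ℝ) (y : ℕ) : ℝ := exp (-(y : ℝ) ^ α)

def hardyConstant (α : ℝ) (i : ℕ) : ℝ :=
  sSup ((fun x : ℕ => (∑ y ∈ Icc x (i - 1), resistance α y) * ∑ y ∈ range (x + 1), mass α y) ''
    {x : ℕ | x < i})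

def hardyScale (α t : ℝ) : ℝ := t ^ (1 - 2 * α) * exp (t ^ α)

theorem Bminus_eq_hardyConstant (d N i : ℕ) : Bminus d N i = hardyConstant (alphaOf d) i := rfl

lemma one_half_le_alphaOf {d : ℕ} (hd : 2 ≤ d) : 1 / 2 ≤ alphaOf d := by
  have hd' : (2 : ℝ) ≤ d := by exact_mod_cast hd
  rw [alphaOf, le_div_iff₀ (by linarith)]
  linarith

lemma alphaOf_lt_one (d : ℕ) : alphaOf d < 1 := by
  rcases d.eq_zero_or_pos with rfl | hd
  · simp [alphaOf]
  · rw [alphaOf, div_lt_one (by exact_mod_cast hd)]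
    linarith

lemma mul_rpow_sub_one_le_rpow {x y α : ℝ} (hx : 0 ≤ x) (hxy : x ≤ y) (hα : α ≤ 1) :
    x * y ^ (α - 1) ≤ x ^ α := by
  rcases hx.eq_or_lt with rfl | hx
  · simp [rpow_nonneg]
  calc x * y ^ (α - 1) ≤ x * x ^ (α - 1) :=
        mul_le_mul_of_nonneg_left (rpow_le_rpow_of_nonpos hx hxy (by linarith)) hx.le
    _ = x ^ α := by rw [rpow_sub_one hx.ne', mul_div_cancel₀ _ hx.ne']

section HardyConstant

variable {α : ℝ}

lemma summable_mass (hα : 0 < α) : Summable (mass α) := by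
  have h := (isLittleO_exp_neg_mul_rpow_atTop one_pos (-2 / α)).comp_tendsto
    ((tendsto_rpow_atTop hα).comp tendsto_natCast_atTop_atTop)
  refine summable_of_isBigO_nat (Real.summable_nat_rpow.mpr (by norm_num : (-2 : ℝ) < -1)) ?_
  refine h.isBigO.congr (fun n => by simp [mass]) (fun n => ?_)
  simp only [Function.comp_apply]
  rw [← rpow_mul n.cast_nonneg, mul_div_cancel₀ _ hα.ne']

lemma one_le_sum_range_mass (hα : α ≠ 0) (x : ℕ) : 1 ≤ ∑ y ∈ range (x + 1), mass α y := by
  rw [sum_range_succ']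
  simp [mass, zero_rpow hα, sum_nonneg fun y _ => (exp_pos _).le]

lemma resistance_nonneg (y : ℕ) : 0 ≤ resistance α y := by
  unfold resistance; positivity

lemma resistance_zero (hα : α ≠ 0) : resistance α 0 = 1 := by
  simp [resistance, zero_rpow hα]

lemma hardyScale_nonneg {t : ℝ} (ht : 0 ≤ t) : 0 ≤ hardyScale α t := by
  unfold hardyScale; positivity

lemma hasDerivAt_hardyScale {t : ℝ} (ht : 0 < t) :
    HasDerivAt (hardyScale α) (exp (t ^ α) * t ^ (-α) * (α + (1 - 2 * α) * t ^ (-α))) t := by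
  refine ((hasDerivAt_rpow_const (p := 1 - 2 * α) (Or.inl ht.ne')).mul
    (hasDerivAt_rpow_const (p := α) (Or.inl ht.ne')).exp).congr_deriv ?_
  have h_sq : t ^ (1 - 2 * α - 1) = t ^ (-α) * t ^ (-α) := by
    rw [← rpow_add ht]; ring_nf
  have h_mul : t ^ (1 - 2 * α) * t ^ (α - 1) = t ^ (-α) := by
    rw [← rpow_add ht]; ring_nf
  rw [h_sq]
  linear_combination exp (t ^ α) * α * h_mul

lemma mul_exp_rpow_le_hardyScale_sub (hα : 1 / 2 ≤ α) (hα₁ : α < 1) {t : ℝ} (ht : 1 ≤ t) :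
    (1 - α) / 2 * (exp (t ^ α) * t ^ (-α)) ≤ hardyScale α (t + 1) - hardyScale α t := by
  obtain ⟨c, ⟨htc, hct⟩, hc⟩ := exists_hasDerivAt_eq_slope (hardyScale α)
    (fun s => exp (s ^ α) * s ^ (-α) * (α + (1 - 2 * α) * s ^ (-α))) (lt_add_one t)
    (fun s hs => (hasDerivAt_hardyScale (by linarith [hs.1])).continuousAt.continuousWithinAt)
    (fun s hs => hasDerivAt_hardyScale (by linarith [hs.1]))
  rw [add_sub_cancel_left, div_one] at hc
  rw [← hc]
  have hc_pow_le : c ^ (-α) ≤ 1 := rpow_le_one_of_one_le_of_nonpos (by linarith) (by linarith)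
  -- `1 - 2α ≤ 0` and `c ^ (-α) ≤ 1` bound the last factor of the derivative below by `1 - α`
  have h_deriv : (1 - α) * (exp (c ^ α) * c ^ (-α)) ≤
      exp (c ^ α) * c ^ (-α) * (α + (1 - 2 * α) * c ^ (-α)) := by
    rw [mul_comm]
    exact mul_le_mul_of_nonneg_left (by nlinarith)
      (mul_nonneg (exp_pos _).le (rpow_nonneg (by linarith) _))
  have h_exp : exp (t ^ α) ≤ exp (c ^ α) :=
    exp_le_exp.mpr (rpow_le_rpow (by linarith) htc.le (by linarith))
  have h_pow : t ^ (-α) / 2 ≤ c ^ (-α) :=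
    calc t ^ (-α) / 2 ≤ 2 ^ (-α) * t ^ (-α) := by
          have : (1 : ℝ) / 2 ≤ 2 ^ (-α) := by
            rw [one_div, ← rpow_neg_one]
            exact rpow_le_rpow_of_exponent_le one_le_two (by linarith)
          nlinarith [rpow_nonneg (by linarith : (0 : ℝ) ≤ t) (-α)]
      _ = (2 * t) ^ (-α) := (mul_rpow zero_le_two (by linarith)).symm
      _ ≤ c ^ (-α) := rpow_le_rpow_of_nonpos (by linarith) (by linarith) (by linarith)
  have : exp (t ^ α) * (t ^ (-α) / 2) ≤ exp (c ^ α) * c ^ (-α) :=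
    mul_le_mul h_exp h_pow (by positivity) (exp_pos _).le
  nlinarith

lemma resistance_le_hardyScale_sub (hα : 1 / 2 ≤ α) (hα₁ : α < 1) {y : ℕ} (hy : 1 ≤ y) :
    resistance α y ≤ 2 / (1 - α) * (hardyScale α (y + 1 : ℕ) - hardyScale α y) := by
  have h := mul_exp_rpow_le_hardyScale_sub hα hα₁ (by exact_mod_cast hy : (1 : ℝ) ≤ y)
  rw [resistance, max_eq_left hy, Nat.cast_add_one, div_mul_eq_mul_div,
    le_div_iff₀ (by linarith)]
  linarith

lemma sum_range_resistance_le_hardyScale (hα : 1 / 2 ≤ α) (hα₁ : α < 1) {i : ℕ} (hi : 1 ≤ i) :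
    ∑ y ∈ range i, resistance α y ≤ 2 / (1 - α) * hardyScale α i := by
  obtain ⟨n, rfl⟩ := Nat.exists_eq_add_of_le' hi
  have hc : 1 ≤ 2 / (1 - α) := by rw [le_div_iff₀ (by linarith)]; linarith
  have h_one : 1 ≤ hardyScale α 1 := by simp [hardyScale]
  have h_tail : ∑ y ∈ range n, resistance α (y + 1) ≤
      2 / (1 - α) * (hardyScale α (n + 1 : ℕ) - hardyScale α 1) := by
    have h_telescope := sum_range_sub (fun k => hardyScale α (k + 1 : ℕ)) n
    simp only [Nat.cast_one, zero_add] at h_telescope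
    rw [← h_telescope, mul_sum]
    exact sum_le_sum fun y _ => resistance_le_hardyScale_sub hα hα₁ (Nat.le_add_left 1 y)
  rw [sum_range_succ', resistance_zero (by linarith)]
  nlinarith

lemma hardyConstant_le (hα : 1 / 2 ≤ α) (hα₁ : α < 1) {i : ℕ} (hi : 1 ≤ i) :
    hardyConstant α i ≤ (2 / (1 - α) * ∑' y, mass α y) * hardyScale α i := by
  have h_tsum : 0 ≤ ∑' y, mass α y := tsum_nonneg fun y => (exp_pos _).le
  have h_scale : 0 ≤ hardyScale α i := hardyScale_nonneg i.cast_nonneg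
  have hc : 0 ≤ 2 / (1 - α) := div_nonneg zero_le_two (by linarith)
  refine Real.sSup_le ?_ (by positivity)
  rintro _ ⟨x, -, rfl⟩
  have h_res : ∑ y ∈ Icc x (i - 1), resistance α y ≤ 2 / (1 - α) * hardyScale α i := by
    refine le_trans (sum_le_sum_of_subset_of_nonneg ?_ fun y _ _ => resistance_nonneg y)
      (sum_range_resistance_le_hardyScale hα hα₁ hi)
    intro y
    simp only [mem_Icc, mem_range]
    omega
  have h_mass : ∑ y ∈ range (x + 1), mass α y ≤ ∑' y, mass α y :=
    (summable_mass (by linarith)).sum_le_tsum _ fun y _ => (exp_pos _).le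
  calc _ ≤ (2 / (1 - α) * hardyScale α i) * ∑' y, mass α y :=
        mul_le_mul h_res h_mass (sum_nonneg fun y _ => (exp_pos _).le) (by positivity)
    _ = _ := by ring

lemma exp_rpow_mul_rpow_neg_le_resistance (hα₀ : 0 ≤ α) {x y i : ℕ} (hxy : x ≤ y) (hyi : y < i) :
    exp ((x : ℝ) ^ α) * (i : ℝ) ^ (-α) ≤ resistance α y := by
  have h_max : (1 : ℝ) ≤ (max y 1 : ℕ) := by exact_mod_cast le_max_right y 1
  have h_max_le : ((max y 1 : ℕ) : ℝ) ≤ i := by exact_mod_cast max_le hyi.le (by omega)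
  exact mul_le_mul (exp_le_exp.mpr (rpow_le_rpow x.cast_nonneg (by exact_mod_cast hxy) hα₀))
    (rpow_le_rpow_of_nonpos (by linarith) h_max_le (by linarith)) (by positivity) (exp_pos _).le

lemma ceil_rpow_one_sub_le {i : ℕ} (hi : 1 ≤ i) (hα₀ : 0 ≤ α) :
    ⌈(i : ℝ) ^ (1 - α)⌉₊ ≤ i :=
  Nat.ceil_le.mpr (rpow_le_self_of_one_le (by exact_mod_cast hi) (by linarith))

lemma rpow_sub_two_le_rpow_sub_ceil (hα₀ : 0 ≤ α) (hα₁ : α ≤ 1) {i : ℕ} (hi : 1 ≤ i) :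
    (i : ℝ) ^ α - 2 ≤ ((i - ⌈(i : ℝ) ^ (1 - α)⌉₊ : ℕ) : ℝ) ^ α := by
  have hI : (1 : ℝ) ≤ i := by exact_mod_cast hi
  have hI₀ : (0 : ℝ) < i := by linarith
  set m := ⌈(i : ℝ) ^ (1 - α)⌉₊
  have hm_lt : (m : ℝ) < (i : ℝ) ^ (1 - α) + 1 := Nat.ceil_lt_add_one (by positivity)
  have h_inv : (i : ℝ) ^ (1 - α) * (i : ℝ) ^ (α - 1) = 1 := by
    rw [← rpow_add hI₀]; norm_num
  have h_drop : (m : ℝ) * (i : ℝ) ^ (α - 1) ≤ 2 := by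
    have : (i : ℝ) ^ (α - 1) ≤ 1 := rpow_le_one_of_one_le_of_nonpos hI (by linarith)
    nlinarith [rpow_nonneg hI₀.le (α - 1)]
  calc (i : ℝ) ^ α - 2 ≤ i * (i : ℝ) ^ (α - 1) - m * (i : ℝ) ^ (α - 1) := by
        conv_lhs => rw [show α = 1 + (α - 1) by ring, rpow_add hI₀, rpow_one]
        linarith
    _ = ((i - m : ℕ) : ℝ) * (i : ℝ) ^ (α - 1) := by
        rw [Nat.cast_sub (ceil_rpow_one_sub_le hi hα₀)]; ring
    _ ≤ ((i - m : ℕ) : ℝ) ^ α := mul_rpow_sub_one_le_rpow (Nat.cast_nonneg _) (by simp) hα₁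

lemma exists_le_sum_Icc_resistance (hα₀ : 0 ≤ α) (hα₁ : α ≤ 1) {i : ℕ} (hi : 1 ≤ i) :
    ∃ x < i, exp (-2) * hardyScale α i ≤ ∑ y ∈ Icc x (i - 1), resistance α y := by
  have hI₀ : (0 : ℝ) < i := by exact_mod_cast hi
  set m := ⌈(i : ℝ) ^ (1 - α)⌉₊
  have hm_ge : (i : ℝ) ^ (1 - α) ≤ m := Nat.le_ceil _
  have hm_pos : 0 < m := Nat.ceil_pos.mpr (by positivity)
  have hm_le : m ≤ i := ceil_rpow_one_sub_le hi hα₀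
  refine ⟨i - m, by omega, ?_⟩
  have h_sum : m * (exp (((i - m : ℕ) : ℝ) ^ α) * (i : ℝ) ^ (-α)) ≤
      ∑ y ∈ Icc (i - m) (i - 1), resistance α y := by
    have h := card_nsmul_le_sum (Icc (i - m) (i - 1)) _ _ fun y hy =>
      exp_rpow_mul_rpow_neg_le_resistance (i := i) hα₀ (mem_Icc.mp hy).1
        (by have := (mem_Icc.mp hy).2; omega)
    rwa [Nat.card_Icc, show i - 1 + 1 - (i - m) = m by omega, nsmul_eq_mul] at h
  calc exp (-2) * hardyScale α i
      = (i : ℝ) ^ (1 - α) * (exp ((i : ℝ) ^ α - 2) * (i : ℝ) ^ (-α)) := by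
        rw [hardyScale, sub_eq_add_neg _ (2 : ℝ), exp_add,
          show 1 - 2 * α = (1 - α) + -α by ring, rpow_add hI₀]
        ring
    _ ≤ m * (exp (((i - m : ℕ) : ℝ) ^ α) * (i : ℝ) ^ (-α)) := by
        gcongr
        exact rpow_sub_two_le_rpow_sub_ceil hα₀ hα₁ hi
    _ ≤ _ := h_sum

lemma le_hardyConstant (hα₀ : 0 < α) (hα₁ : α ≤ 1) {i : ℕ} (hi : 1 ≤ i) :
    exp (-2) * hardyScale α i ≤ hardyConstant α i := by
  obtain ⟨x, hx, h⟩ := exists_le_sum_Icc_resistance hα₀.le hα₁ hi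
  calc exp (-2) * hardyScale α i ≤ ∑ y ∈ Icc x (i - 1), resistance α y := h
    _ ≤ (∑ y ∈ Icc x (i - 1), resistance α y) * ∑ y ∈ range (x + 1), mass α y :=
        le_mul_of_one_le_right (sum_nonneg fun y _ => resistance_nonneg y)
          (one_le_sum_range_mass hα₀.ne' x)
    _ ≤ hardyConstant α i := le_csSup ((Set.finite_Iio i).image _).bddAbove ⟨x, hx, rfl⟩

end HardyConstant

theorem Bminus_asymptotics (d : ℕ) (hd : 2 ≤ d) :
    ∃ k : ℝ, 1 ≤ k ∧ ∀ N : ℕ, 1 ≤ N → ∀ i : ℕ, 1 ≤ i → i ≤ N ^ d →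
      (1 / k) * (i : ℝ) ^ (1 - 2 * alphaOf d) * Real.exp ((i : ℝ) ^ alphaOf d) ≤
        Bminus d N i ∧
      Bminus d N i ≤
        k * (i : ℝ) ^ (1 - 2 * alphaOf d) * Real.exp ((i : ℝ) ^ alphaOf d) := by
  have hα := one_half_le_alphaOf hd
  have hα₁ := alphaOf_lt_one d
  refine ⟨max (exp 2) (2 / (1 - alphaOf d) * ∑' y, mass (alphaOf d) y),
    (one_le_exp zero_le_two).trans (le_max_left _ _), fun N _ i hi _ => ?_⟩
  have h_scale := hardyScale_nonneg (α := alphaOf d) i.cast_nonneg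
  rw [Bminus_eq_hardyConstant, mul_assoc, mul_assoc]
  constructor
  · refine le_trans ?_ (le_hardyConstant (by linarith) hα₁.le hi)
    refine mul_le_mul_of_nonneg_right ?_ h_scale
    rw [exp_neg, ← one_div]
    exact one_div_le_one_div_of_le (exp_pos 2) (le_max_left _ _)
  · exact (hardyConstant_le hα hα₁ hi).trans (mul_le_mul_of_nonneg_right (le_max_right _ _) h_scale)

end
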